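/- Let n ≥ 3. If the edge set of the complete geometric graph on the regular wheel configuration W_{2n} is partitioned into n plane spanning trees, then none of these n trees is a Hamiltonian path (i.e., each tree has some vertex of degree at least 3). -/

import Mathlib

/-- Points in the plane. -/
abbrev Pt : Type := ℝ × ℝ

/-- A finite point set is in general position if no three of its points are collinear. -/
def GenPos (S : Finset Pt) : Prop :=
  ∀ p ∈ S, ∀ q ∈ S, ∀ r ∈ S, p ≠ q → p ≠ r → q ≠ r →
    ¬ Collinear ℝ ({p, q, r} : Set Pt)

/-- A geometric graph on `S` (a simple graph on the points of `S`, edges drawn as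
straight segments) is plane if the open segments of any two distinct edges are disjoint. -/
def IsPlaneGraph {S : Finset Pt} (G : SimpleGraph {x // x ∈ S}) : Prop :=
  ∀ a b c d : {x // x ∈ S}, G.Adj a b → G.Adj c d → s(a, b) ≠ s(c, d) →
    openSegment ℝ (a : Pt) (b : Pt) ∩ openSegment ℝ (c : Pt) (d : Pt) = ∅

/-- A plane spanning tree of `S`: a tree on all points of `S` drawn without crossings. -/
def IsPlaneSpanningTree {S : Finset Pt} (G : SimpleGraph {x // x ∈ S}) : Prop :=
  G.IsTree ∧ IsPlaneGraph G

/-- A plane spanning path of `S`: a plane spanning tree in which every vertex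
has degree at most two (i.e. a plane Hamiltonian path). -/
def IsPlaneSpanningPath {S : Finset Pt} (G : SimpleGraph {x // x ∈ S}) : Prop :=
  IsPlaneSpanningTree G ∧
    ∀ v a b c : {x // x ∈ S}, G.Adj v a → G.Adj v b → G.Adj v c →
      (a = b ∨ a = c ∨ b = c)

/-- The open segment spanned by an unordered pair of points. -/
def segOpen (e : Sym2 Pt) : Set Pt :=
  Sym2.lift ⟨fun a b => openSegment ℝ a b, fun a b => openSegment_symm ℝ a b⟩ e

/-- `F` is a crossing family in `S`: a set of nondegenerate segments with endpoints
in `S`, any two of which cross (their open segments intersect). -/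
def IsCrossingFamily (S : Finset Pt) (F : Finset (Sym2 Pt)) : Prop :=
  (∀ e ∈ F, ¬ e.IsDiag ∧ ∀ x ∈ e, x ∈ S) ∧
  (∀ e ∈ F, ∀ f ∈ F, e ≠ f → (segOpen e ∩ segOpen f).Nonempty)

/-- `x` lies strictly to the left of the directed line from `p` to `q`. -/
def leftOf (p q x : Pt) : Prop :=
  0 < (q.1 - p.1) * (x.2 - p.2) - (q.2 - p.2) * (x.1 - p.1)

/-- `x` lies strictly to the right of the directed line from `p` to `q`. -/
def rightOf (p q x : Pt) : Prop :=
  (q.1 - p.1) * (x.2 - p.2) - (q.2 - p.2) * (x.1 - p.1) < 0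

/-- The double star on `S` associated with the directed edge `pq`: the edge `pq`,
the edges from `p` to all points strictly left of the directed line `pq`, and the
edges from `q` to all points strictly right of it. -/
def doubleStar (S : Finset Pt) (p q : Pt) : SimpleGraph {x // x ∈ S} :=
  SimpleGraph.fromRel fun a b =>
    ((a : Pt) = p ∧ (b : Pt) = q) ∨
    ((a : Pt) = p ∧ leftOf p q (b : Pt)) ∨
    ((a : Pt) = q ∧ rightOf p q (b : Pt))

/-- The regular wheel configuration `W_{2n}`: `2n-1` points regularly spaced on the
unit circle together with its center. -/
noncomputable def wheel (n : ℕ) : Finset Pt :=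
  insert ((0 : ℝ), (0 : ℝ)) <| (Finset.range (2 * n - 1)).image fun j : ℕ =>
    (Real.cos (2 * Real.pi * (j : ℝ) / ((2 * n - 1 : ℕ) : ℝ)),
     Real.sin (2 * Real.pi * (j : ℝ) / ((2 * n - 1 : ℕ) : ℝ)))

/-!
Let `M = 2n - 1` be the number of rim points and call a chord joining rim points `n - 1` steps
apart *long*; there are `M` of them. Two long chords of a plane graph must share an endpoint, so
for `n ≥ 3` a plane tree contains at most two long chords, and two of them form a cherry
`x ~ x + (n - 1)`, `x ~ x + n`. As the `n` trees cover all `2n - 1` long chords, all trees but at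
most one are cherries.

The triangle of a cherry contains the centre, so a spoke of a cherry tree ends at a cherry vertex,
and by acyclicity a cherry tree has exactly one spoke. Hence a tree that is not a cherry carries at
least `M - (n - 1) = n ≥ 3` spokes, and the centre is a branch vertex. In a cherry tree whose spoke
ends at `x + (n - 1)` (or `x + n`) the rim points cut off by the chord `x ~ x + (n - 1)` (or
`x + n ~ x`) reach the rest of the tree only through an endpoint of that chord, which therefore
gets a third neighbour; a spoke at `x` is itself a third edge at `x`.
-/

open Real Finset

def orient (p q x : Pt) : ℝ :=
  (q.1 - p.1) * (x.2 - p.2) - (q.2 - p.2) * (x.1 - p.1)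

lemma orient_swap (p q x : Pt) : orient p q x = -orient p x q := by
  simp only [orient]; ring

lemma orient_rotate (p q x : Pt) : orient p q x = orient q x p := by
  simp only [orient]; ring

lemma div_sub_mem_Ioo_of_mul_neg {X Y : ℝ} (h : X * Y < 0) : X / (X - Y) ∈ Set.Ioo 0 1 := by
  rcases mul_neg_iff.mp h with ⟨hX, hY⟩ | ⟨hX, hY⟩
  · exact ⟨div_pos hX (by linarith), (div_lt_one (by linarith)).2 (by linarith)⟩
  · rw [← neg_div_neg_eq]
    exact ⟨div_pos (by linarith) (by linarith), (div_lt_one (by linarith)).2 (by linarith)⟩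

lemma openSegment_inter_nonempty_of_orient {a b c d : Pt}
    (hab : orient a b c * orient a b d < 0) (hcd : orient c d a * orient c d b < 0) :
    (openSegment ℝ a b ∩ openSegment ℝ c d).Nonempty := by
  obtain ⟨ht0, ht1⟩ := div_sub_mem_Ioo_of_mul_neg hcd
  obtain ⟨hu0, hu1⟩ := div_sub_mem_Ioo_of_mul_neg hab
  have hs : orient c d a - orient c d b ≠ 0 := fun h => by simp [h] at ht0
  have hr : orient a b c - orient a b d ≠ 0 := fun h => by simp [h] at hu0
  -- `t` puts the point on line `cd`, `u` puts it on line `ab`; the two points agree by a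
  -- polynomial identity in the coordinates.
  set t := orient c d a / (orient c d a - orient c d b)
  set u := orient a b c / (orient a b c - orient a b d)
  refine ⟨(1 - t) • a + t • b, ⟨1 - t, t, by linarith, ht0, by ring, rfl⟩,
    ⟨1 - u, u, by linarith, hu0, by ring, ?_⟩⟩
  simp only [t, u, orient] at hs hr ⊢
  ext <;> simp only [Prod.fst_add, Prod.snd_add, Prod.smul_fst, Prod.smul_snd, smul_eq_mul] <;>
    field_simp <;> ring

noncomputable def circlePt (M j : ℕ) : Pt :=
  (cos (2 * π * j / M), sin (2 * π * j / M))

lemma circlePt_eq_iff {M : ℕ} (hM : 0 < M) {j k : ℕ} :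
    circlePt M j = circlePt M k ↔ j ≡ k [MOD M] := by
  have hM' : (M : ℝ) ≠ 0 := by positivity
  have hangle : circlePt M j = circlePt M k ↔
      ((2 * π * j / M : ℝ) : Angle) = (2 * π * k / M : ℝ) := by
    refine ⟨fun h => Angle.cos_sin_inj (congrArg Prod.fst h) (congrArg Prod.snd h),
      fun h => Prod.ext ?_ ?_⟩
    · simpa only [circlePt, Angle.cos_coe] using congrArg Angle.cos h
    · simpa only [circlePt, Angle.sin_coe] using congrArg Angle.sin h
  rw [hangle, Angle.angle_eq_iff_two_pi_dvd_sub, Nat.modEq_iff_dvd]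
  constructor
  · rintro ⟨t, ht⟩
    refine ⟨-t, ?_⟩
    have : ((k : ℤ) - j : ℝ) = ((M * -t : ℤ) : ℝ) := by
      push_cast
      field_simp at ht
      nlinarith [pi_pos]
    exact_mod_cast this
  · rintro ⟨t, ht⟩
    refine ⟨-t, ?_⟩
    have : (k : ℝ) - j = M * t := by exact_mod_cast ht
    push_cast
    field_simp
    linarith

lemma circlePt_ne_zero (M j : ℕ) : circlePt M j ≠ 0 := by
  intro h
  have := sin_sq_add_cos_sq (2 * π * j / M)
  simp_all [circlePt, Prod.ext_iff]

lemma sin_add_sin_sub_sin_add_pos {X Y : ℝ} (hX : 0 < X) (hY : 0 < Y) (hXY : X + Y < 2 * π) :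
    0 < sin X + sin Y - sin (X + Y) := by
  obtain ⟨x, rfl⟩ : ∃ x, X = 2 * x := ⟨X / 2, by ring⟩
  obtain ⟨y, rfl⟩ : ∃ y, Y = 2 * y := ⟨Y / 2, by ring⟩
  have key : sin (2 * x) + sin (2 * y) - sin (2 * x + 2 * y) = 4 * sin x * sin y * sin (x + y) := by
    rw [← mul_add]
    simp only [sin_two_mul, sin_add, cos_add]
    linear_combination (-2 * sin y * cos y) * sin_sq_add_cos_sq x
      + (-2 * sin x * cos x) * sin_sq_add_cos_sq y
  have := pi_pos
  have hx := sin_pos_of_pos_of_lt_pi (x := x) (by linarith) (by linarith)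
  have hy := sin_pos_of_pos_of_lt_pi (x := y) (by linarith) (by linarith)
  have hxy := sin_pos_of_pos_of_lt_pi (x := x + y) (by linarith) (by linarith)
  rw [key]
  positivity

lemma orient_circlePt_pos {M a b c : ℕ} (hab : a < b) (hbc : b < c) (hca : c < a + M) :
    0 < orient (circlePt M a) (circlePt M b) (circlePt M c) := by
  have hM : (0 : ℝ) < M := by exact_mod_cast (show 0 < M by omega)
  have hab' : (a : ℝ) < b := by exact_mod_cast hab
  have hbc' : (b : ℝ) < c := by exact_mod_cast hbc
  have hca' : (c : ℝ) < a + M := by exact_mod_cast hca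
  have key := sin_add_sin_sub_sin_add_pos (X := 2 * π * (b - a) / M) (Y := 2 * π * (c - b) / M)
    (by have := pi_pos; positivity) (by have := pi_pos; positivity)
    (by rw [← add_div, div_lt_iff₀ hM]; nlinarith [pi_pos])
  have hsum : 2 * π * (b - a) / M + 2 * π * (c - b) / M = -(2 * π * a / M - 2 * π * c / M) := by
    ring
  rw [hsum, sin_neg] at key
  simp only [orient, circlePt]
  convert key using 1
  simp only [mul_sub, sub_div, sin_sub]
  ring

lemma orient_zero_circlePt_pos {M a b : ℕ} (hab : a < b) (hb : 2 * b < 2 * a + M) :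
    0 < orient 0 (circlePt M a) (circlePt M b) := by
  have hM : (0 : ℝ) < M := by exact_mod_cast (show 0 < M by omega)
  have hab' : (a : ℝ) < b := by exact_mod_cast hab
  have hb' : 2 * (b : ℝ) < 2 * a + M := by exact_mod_cast hb
  have key := sin_pos_of_pos_of_lt_pi (x := 2 * π * (b - a) / M) (by have := pi_pos; positivity)
    (by rw [div_lt_iff₀ hM]; nlinarith [pi_pos])
  simp only [orient, circlePt]
  convert key using 1
  simp only [mul_sub, sub_div, sin_sub, Prod.fst_zero, Prod.snd_zero, sub_zero]
  ring

lemma openSegment_circlePt_inter_nonempty {M x₁ x₂ x₃ x₄ : ℕ} (h₁₂ : x₁ < x₂) (h₂₃ : x₂ < x₃)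
    (h₃₄ : x₃ < x₄) (h₄₁ : x₄ < x₁ + M) :
    (openSegment ℝ (circlePt M x₁) (circlePt M x₃) ∩
      openSegment ℝ (circlePt M x₂) (circlePt M x₄)).Nonempty := by
  apply openSegment_inter_nonempty_of_orient
  · rw [orient_swap _ _ (circlePt M x₂)]
    exact mul_neg_of_neg_of_pos (neg_neg_of_pos (orient_circlePt_pos h₁₂ h₂₃ (by omega)))
      (orient_circlePt_pos (h₁₂.trans h₂₃) h₃₄ h₄₁)
  · rw [← orient_rotate, orient_swap _ _ (circlePt M x₃)]
    exact mul_neg_of_pos_of_neg (orient_circlePt_pos h₁₂ (h₂₃.trans h₃₄) h₄₁)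
      (neg_neg_of_pos (orient_circlePt_pos h₂₃ h₃₄ (by omega)))

lemma openSegment_zero_circlePt_inter_nonempty {M p j q : ℕ} (hpj : p < j) (hjq : j < q)
    (hq : 2 * q < 2 * p + M) :
    (openSegment ℝ 0 (circlePt M j) ∩ openSegment ℝ (circlePt M p) (circlePt M q)).Nonempty := by
  apply openSegment_inter_nonempty_of_orient
  · rw [orient_swap _ _ (circlePt M p)]
    exact mul_neg_of_neg_of_pos (neg_neg_of_pos (orient_zero_circlePt_pos hpj (by omega)))
      (orient_zero_circlePt_pos hjq (by omega))
  · rw [← orient_rotate, orient_swap _ _ (circlePt M j)]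
    exact mul_neg_of_pos_of_neg (orient_zero_circlePt_pos (hpj.trans hjq) hq)
      (neg_neg_of_pos (orient_circlePt_pos hpj hjq (by omega)))

lemma IsPlaneGraph.sym2_eq_of_inter_nonempty {S : Finset Pt} {G : SimpleGraph {x // x ∈ S}}
    (hG : IsPlaneGraph G) {a b c d : {x // x ∈ S}} (hab : G.Adj a b) (hcd : G.Adj c d)
    (h : (openSegment ℝ (a : Pt) b ∩ openSegment ℝ (c : Pt) d).Nonempty) : s(a, b) = s(c, d) := by
  by_contra hne
  exact h.ne_empty (hG a b c d hab hcd hne)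

def HasBranchVertex {V : Type*} (G : SimpleGraph V) : Prop :=
  ∃ v a b c : V, a ≠ b ∧ a ≠ c ∧ b ≠ c ∧ G.Adj v a ∧ G.Adj v b ∧ G.Adj v c

lemma SimpleGraph.IsAcyclic.eq_of_adj_of_adj_of_isPath {V : Type*} {G : SimpleGraph V}
    (hG : G.IsAcyclic) {o u w : V} (hu : G.Adj o u) (hw : G.Adj o w) (p : G.Walk u w)
    (hp : p.IsPath) (ho : o ∉ p.support) : u = w := by
  by_contra huw
  have hq : (SimpleGraph.Walk.cons hu.symm (SimpleGraph.Walk.cons hw .nil)).IsPath := by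
    simp [hu.ne', hw.ne, huw]
  have := congrArg (fun q : G.Path u w => (q : G.Walk u w).support)
    ((hG.subsingleton_path u w).elim ⟨p, hp⟩ ⟨_, hq⟩)
  simp only at this
  simp [this] at ho

lemma SimpleGraph.IsAcyclic.eq_of_adj_of_adj_of_cherry {V : Type*} {G : SimpleGraph V}
    (hG : G.IsAcyclic) {o a b c u w : V} (hab : G.Adj a b) (hac : G.Adj a c) (hoa : o ≠ a)
    (hob : o ≠ b) (hoc : o ≠ c) (hu : G.Adj o u) (hw : G.Adj o w) (hu' : u = a ∨ u = b ∨ u = c)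
    (hw' : w = a ∨ w = b ∨ w = c) : u = w := by
  by_contra huw
  rcases hu' with rfl | rfl | rfl <;> rcases hw' with rfl | rfl | rfl
  all_goals apply huw
  all_goals first
    | rfl
    | exact hG.eq_of_adj_of_adj_of_isPath hu hw (.cons hab .nil) (by simp [hab.ne]) (by simp [*])
    | exact hG.eq_of_adj_of_adj_of_isPath hu hw (.cons hac .nil) (by simp [hac.ne]) (by simp [*])
    | exact hG.eq_of_adj_of_adj_of_isPath hu hw (.cons hab.symm .nil) (by simp [hab.ne'])
        (by simp [*])
    | exact hG.eq_of_adj_of_adj_of_isPath hu hw (.cons hac.symm .nil) (by simp [hac.ne'])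
        (by simp [*])
    | exact hG.eq_of_adj_of_adj_of_isPath hu hw (.cons hab.symm (.cons hac .nil))
        (by simp [hab.ne', hac.ne, huw]) (by simp [*])
    | exact hG.eq_of_adj_of_adj_of_isPath hu hw (.cons hac.symm (.cons hab .nil))
        (by simp [hac.ne', hab.ne, huw]) (by simp [*])

lemma Finset.card_le_sum_card_filter {ι α : Type*} [Fintype ι] (s : Finset α) (P : ι → α → Prop)
    [∀ i, DecidablePred (P i)] (h : ∀ a ∈ s, ∃ i, P i a) :
    #s ≤ ∑ i, #(s.filter (P i)) := by
  classical
  calc #s ≤ #(univ.biUnion fun i => s.filter (P i)) := card_le_card fun a ha => by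
        obtain ⟨i, hi⟩ := h a ha
        exact mem_biUnion.2 ⟨i, mem_univ _, mem_filter.2 ⟨ha, hi⟩⟩
    _ ≤ ∑ i, #(s.filter (P i)) := card_biUnion_le

lemma Finset.card_filter_lt_add_sum_le {ι : Type*} [Fintype ι] (f : ι → ℕ) {b : ℕ}
    (hf : ∀ i, f i ≤ b) : #(univ.filter fun i => f i < b) + ∑ i, f i ≤ b * Fintype.card ι := by
  calc #(univ.filter fun i => f i < b) + ∑ i, f i ≤ ∑ i, (b - f i) + ∑ i, f i := by
        gcongr
        calc #(univ.filter fun i => f i < b) = ∑ i ∈ univ.filter fun i => f i < b, 1 :=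
              card_eq_sum_ones _
          _ ≤ ∑ i ∈ univ.filter fun i => f i < b, (b - f i) :=
              sum_le_sum fun i hi => by have := (mem_filter.1 hi).2; omega
          _ ≤ ∑ i, (b - f i) := sum_le_sum_of_subset (filter_subset _ _)
    _ = b * Fintype.card ι := by
        rw [← sum_add_distrib, sum_congr rfl fun i _ => Nat.sub_add_cancel (hf i)]
        simp [mul_comm]

lemma Finset.sum_le_add_mul_card_sub_one {ι : Type*} [Fintype ι] [DecidableEq ι] (f : ι → ℕ)
    {i : ι} {b : ℕ} (hf : ∀ j ≠ i, f j ≤ b) : ∑ j, f j ≤ f i + b * (Fintype.card ι - 1) := by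
  rw [← add_sum_erase _ _ (mem_univ i), ← card_univ, ← card_erase_of_mem (mem_univ i),
    mul_comm, ← smul_eq_mul]
  gcongr
  exact sum_le_card_nsmul _ _ _ fun j hj => hf j (ne_of_mem_erase hj)

def center (n : ℕ) : {x // x ∈ wheel n} :=
  ⟨0, Finset.mem_insert_self _ _⟩

section Wheel

variable {n : ℕ} [NeZero n] {G : SimpleGraph {x // x ∈ wheel n}}

lemma circlePt_mem_wheel (j : ℕ) : circlePt (2 * n - 1) j ∈ wheel n := by
  have hM : 0 < 2 * n - 1 := by have := NeZero.pos n; omega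
  rw [(circlePt_eq_iff hM).2 (Nat.mod_modEq j _).symm]
  exact mem_insert_of_mem (mem_image_of_mem _ (mem_range.2 (Nat.mod_lt _ hM)))

variable (n) in
noncomputable def rim (j : ℕ) : {x // x ∈ wheel n} :=
  ⟨circlePt (2 * n - 1) j, circlePt_mem_wheel j⟩

lemma rim_eq_rim_iff {j k : ℕ} : rim n j = rim n k ↔ j ≡ k [MOD 2 * n - 1] := by
  rw [Subtype.ext_iff]
  exact circlePt_eq_iff (by have := NeZero.pos n; omega)

lemma rim_ne_center (j : ℕ) : rim n j ≠ center n :=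
  fun h => circlePt_ne_zero _ j (congrArg Subtype.val h)

lemma rim_ne_rim {j k : ℕ} (hjk : j < k) (hkj : k < j + (2 * n - 1)) : rim n j ≠ rim n k := by
  rw [Ne, rim_eq_rim_iff, Nat.modEq_iff_dvd' hjk.le]
  exact fun h => absurd (Nat.le_of_dvd (by omega) h) (by omega)

lemma rim_inj_of_lt {j k : ℕ} (hj : j < 2 * n - 1) (hk : k < 2 * n - 1) :
    rim n j = rim n k ↔ j = k := by
  refine ⟨fun h => ?_, congrArg _⟩
  by_contra hjk
  rcases Nat.lt_or_gt_of_ne hjk with hlt | hlt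
  · exact rim_ne_rim hlt (by omega) h
  · exact rim_ne_rim hlt (by omega) h.symm

lemma rim_add_period (j : ℕ) : rim n (j + (2 * n - 1)) = rim n j :=
  rim_eq_rim_iff.2 (Nat.add_modEq_right)

lemma eq_center_or_exists_rim (v : {x // x ∈ wheel n}) : v = center n ∨ ∃ j, v = rim n j := by
  obtain ⟨p, hp⟩ := v
  rcases mem_insert.1 hp with rfl | hp
  · exact Or.inl rfl
  · obtain ⟨j, -, rfl⟩ := mem_image.1 hp
    exact Or.inr ⟨j, rfl⟩

lemma exists_rim_add_eq (x j : ℕ) : ∃ k < 2 * n - 1, rim n (x + k) = rim n j := by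
  set M := 2 * n - 1
  have hM : 0 < M := by have := NeZero.pos n; omega
  refine ⟨(j + M * x - x) % M, Nat.mod_lt _ hM, rim_eq_rim_iff.2 ?_⟩
  calc x + (j + M * x - x) % M ≡ x + (j + M * x - x) [MOD M] :=
        Nat.ModEq.add_left _ (Nat.mod_modEq _ _)
    _ = j + M * x := by have := Nat.le_mul_of_pos_left x hM; omega
    _ ≡ j [MOD M] := Nat.add_mul_mod_self_left ..

lemma IsPlaneGraph.not_adj_rim_of_interleaved (hG : IsPlaneGraph G) {x₁ x₂ x₃ x₄ : ℕ}
    (h₁₃ : G.Adj (rim n x₁) (rim n x₃)) (h₁₂ : x₁ < x₂) (h₂₃ : x₂ < x₃) (h₃₄ : x₃ < x₄)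
    (h₄₁ : x₄ < x₁ + (2 * n - 1)) : ¬ G.Adj (rim n x₂) (rim n x₄) := by
  intro h₂₄
  rcases Sym2.eq_iff.1 (hG.sym2_eq_of_inter_nonempty h₁₃ h₂₄
    (openSegment_circlePt_inter_nonempty h₁₂ h₂₃ h₃₄ h₄₁)) with ⟨h, -⟩ | ⟨h, -⟩
  · exact rim_ne_rim h₁₂ (by omega) h
  · exact rim_ne_rim (by omega) h₄₁ h

lemma IsPlaneGraph.not_adj_center_of_lt_of_lt (hG : IsPlaneGraph G) {p j q : ℕ}
    (hpq : G.Adj (rim n p) (rim n q)) (hpj : p < j) (hjq : j < q)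
    (hq : 2 * q < 2 * p + (2 * n - 1)) : ¬ G.Adj (center n) (rim n j) := by
  intro hcj
  rcases Sym2.eq_iff.1 (hG.sym2_eq_of_inter_nonempty hcj hpq
    (openSegment_zero_circlePt_inter_nonempty hpj hjq hq)) with ⟨h, -⟩ | ⟨h, -⟩ <;>
    exact rim_ne_center _ h.symm

open Classical in
noncomputable def longChords (G : SimpleGraph {x // x ∈ wheel n}) : Finset ℕ :=
  (range (2 * n - 1)).filter fun a => G.Adj (rim n a) (rim n (a + (n - 1)))

open Classical in
noncomputable def spokes (G : SimpleGraph {x // x ∈ wheel n}) : Finset ℕ :=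
  (range (2 * n - 1)).filter fun j => G.Adj (center n) (rim n j)

lemma mem_longChords {a : ℕ} :
    a ∈ longChords G ↔ a < 2 * n - 1 ∧ G.Adj (rim n a) (rim n (a + (n - 1))) := by
  simp [longChords]

lemma IsPlaneGraph.eq_add_sub_one_or_eq_add_of_mem_longChords (hG : IsPlaneGraph G) {a b : ℕ}
    (ha : a ∈ longChords G) (hb : b ∈ longChords G) (hab : a < b) :
    b = a + (n - 1) ∨ b = a + n := by
  rw [mem_longChords] at ha hb
  rcases (by omega : b < a + (n - 1) ∨ b = a + (n - 1) ∨ b = a + n ∨ a + n < b)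
    with h | h | h | h
  · exact absurd hb.2 (hG.not_adj_rim_of_interleaved ha.2 hab h (by omega) (by omega))
  · exact Or.inl h
  · exact Or.inr h
  · have ha' : G.Adj (rim n (a + (n - 1))) (rim n (a + (2 * n - 1))) := by
      rw [rim_add_period]; exact ha.2.symm
    exact absurd hb.2 (hG.not_adj_rim_of_interleaved ha' (by omega) (by omega) (by omega)
      (by omega))

lemma IsPlaneGraph.card_longChords_le_two (hG : IsPlaneGraph G) (hn : 3 ≤ n) :
    #(longChords G) ≤ 2 := by
  by_contra! h
  obtain ⟨a, ha, b, hb, c, hc, hab, hac, hbc⟩ := two_lt_card.1 h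
  have gap : ∀ {x y}, x ∈ longChords G → y ∈ longChords G → x ≠ y →
      y = x + (n - 1) ∨ y = x + n ∨ x = y + (n - 1) ∨ x = y + n := fun hx hy hxy => by
    rcases hxy.lt_or_gt with h | h
    · rcases hG.eq_add_sub_one_or_eq_add_of_mem_longChords hx hy h with h | h <;> simp [h]
    · rcases hG.eq_add_sub_one_or_eq_add_of_mem_longChords hy hx h with h | h <;> simp [h]
  have := gap ha hb hab
  have := gap ha hc hac
  have := gap hb hc hbc
  omega

def IsCherryAt (G : SimpleGraph {x // x ∈ wheel n}) (x : ℕ) : Prop :=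
  G.Adj (rim n x) (rim n (x + (n - 1))) ∧ G.Adj (rim n x) (rim n (x + n))

lemma IsPlaneGraph.exists_isCherryAt (hG : IsPlaneGraph G) (h : 1 < #(longChords G)) :
    ∃ x, IsCherryAt G x := by
  obtain ⟨a, ha, b, hb, hab⟩ := one_lt_card.1 h
  wlog hlt : a < b generalizing a b
  · exact this b hb a ha hab.symm (by omega)
  have hwrap (x y : ℕ) (h : y = x + (2 * n - 1)) : rim n y = rim n x := h ▸ rim_add_period x
  rcases hG.eq_add_sub_one_or_eq_add_of_mem_longChords ha hb hlt with rfl | rfl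
  · refine ⟨a + (n - 1), (mem_longChords.1 hb).2, ?_⟩
    rw [hwrap a (a + (n - 1) + n) (by omega)]; exact (mem_longChords.1 ha).2.symm
  · refine ⟨a, (mem_longChords.1 ha).2, ?_⟩
    have := (mem_longChords.1 hb).2.symm
    rwa [hwrap a (a + n + (n - 1)) (by omega)] at this

lemma IsPlaneGraph.rim_eq_of_isCherryAt_of_adj_center (hG : IsPlaneGraph G) {x j : ℕ}
    (hx : IsCherryAt G x) (hj : G.Adj (center n) (rim n j)) :
    rim n j = rim n x ∨ rim n j = rim n (x + (n - 1)) ∨ rim n j = rim n (x + n) := by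
  obtain ⟨k, hk, hkj⟩ := exists_rim_add_eq (n := n) x j
  rw [← hkj] at hj ⊢
  rcases (by omega : k = 0 ∨ 0 < k ∧ k < n - 1 ∨ k = n - 1 ∨ k = n ∨ n < k) with h | h | h | h | h
  · simp [h]
  · exact absurd hj (hG.not_adj_center_of_lt_of_lt hx.1 (by omega) (by omega) (by omega))
  · simp [h]
  · simp [h]
  · have hx' : G.Adj (rim n (x + n)) (rim n (x + (2 * n - 1))) := by
      rw [rim_add_period]; exact hx.2.symm
    exact absurd hj (hG.not_adj_center_of_lt_of_lt hx' (by omega) (by omega) (by omega))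

lemma IsPlaneGraph.card_spokes_le_one_of_isCherryAt (hG : IsPlaneGraph G) (hac : G.IsAcyclic)
    {x : ℕ} (hx : IsCherryAt G x) : #(spokes G) ≤ 1 := by
  refine card_le_one.2 fun j hj k hk => ?_
  simp only [spokes, mem_filter, mem_range] at hj hk
  have := hac.eq_of_adj_of_adj_of_cherry hx.1 hx.2 (rim_ne_center x).symm
    (rim_ne_center _).symm (rim_ne_center _).symm hj.2 hk.2
    (hG.rim_eq_of_isCherryAt_of_adj_center hx hj.2) (hG.rim_eq_of_isCherryAt_of_adj_center hx hk.2)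
  exact (rim_inj_of_lt hj.1 hk.1).1 this

lemma IsPlaneGraph.exists_adj_of_arc (hG : IsPlaneGraph G) (hconn : G.Connected) {p q : ℕ}
    (hpq : G.Adj (rim n p) (rim n q)) (hp : p + 1 < q)
    (hcenter : ∀ j, p < j → j < q → ¬ G.Adj (center n) (rim n j)) :
    ∃ j, p < j ∧ j < q ∧ (G.Adj (rim n j) (rim n p) ∨ G.Adj (rim n j) (rim n q)) := by
  let A : Set {x // x ∈ wheel n} := {v | ∃ j, p < j ∧ j < q ∧ v = rim n j}
  obtain ⟨walk⟩ := hconn.preconnected (rim n (p + 1)) (center n)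
  obtain ⟨d, -, ⟨j, hpj, hjq, hj⟩, hout⟩ := walk.exists_boundary_dart A
    ⟨p + 1, by omega, hp, rfl⟩ fun ⟨j, _, _, h⟩ => rim_ne_center j h.symm
  have hadj : G.Adj (rim n j) d.snd := hj ▸ d.adj
  refine ⟨j, hpj, hjq, ?_⟩
  rcases eq_center_or_exists_rim d.snd with hc | ⟨i, hi⟩
  · exact absurd (hc ▸ hadj).symm (hcenter j hpj hjq)
  obtain ⟨k, hk, hki⟩ := exists_rim_add_eq (n := n) p i
  rw [hi, ← hki] at hadj hout
  rcases (by omega : k = 0 ∨ 0 < k ∧ p + k < q ∨ p + k = q ∨ q < p + k) with h | h | h | h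
  · rw [h, add_zero] at hadj; exact Or.inl hadj
  · exact absurd ⟨p + k, by omega, h.2, rfl⟩ hout
  · rw [h] at hadj; exact Or.inr hadj
  · exact absurd hadj (hG.not_adj_rim_of_interleaved hpq hpj hjq h (by omega))

lemma IsPlaneSpanningTree.hasBranchVertex_of_isCherryAt (hG : IsPlaneSpanningTree G) (hn : 3 ≤ n)
    {x : ℕ} (hx : IsCherryAt G x) : HasBranchVertex G := by
  have hconn := hG.1.connected
  obtain ⟨walk⟩ := hconn.preconnected (center n) (rim n x)
  obtain ⟨d, -, hd, hd'⟩ := walk.exists_boundary_dart {center n} rfl (rim_ne_center x)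
  obtain ⟨j, hj⟩ := (eq_center_or_exists_rim d.snd).resolve_left hd'
  have hspoke : G.Adj (center n) (rim n j) := hd ▸ hj ▸ d.adj
  rcases hG.2.rim_eq_of_isCherryAt_of_adj_center hx hspoke with h | h | h <;> rw [h] at hspoke
  · exact ⟨rim n x, rim n (x + (n - 1)), rim n (x + n), center n, rim_ne_rim (by omega) (by omega),
      rim_ne_center _, rim_ne_center _, hx.1, hx.2, hspoke.symm⟩
  · obtain ⟨j, hxj, hjx, hadj | hadj⟩ := hG.2.exists_adj_of_arc hconn hx.1 (by omega)
      fun j h₁ h₂ => hG.2.not_adj_center_of_lt_of_lt hx.1 h₁ h₂ (by omega)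
    · exact ⟨rim n x, rim n j, rim n (x + (n - 1)), rim n (x + n), rim_ne_rim hjx (by omega),
        rim_ne_rim (by omega) (by omega), rim_ne_rim (by omega) (by omega), hadj.symm, hx.1, hx.2⟩
    · exact ⟨rim n (x + (n - 1)), rim n j, rim n x, center n, (rim_ne_rim hxj (by omega)).symm,
        rim_ne_center _, rim_ne_center _, hadj.symm, hx.1.symm, hspoke.symm⟩
  · have hx' : G.Adj (rim n (x + n)) (rim n (x + (2 * n - 1))) := by
      rw [rim_add_period]; exact hx.2.symm
    obtain ⟨j, hxj, hjx, hadj | hadj⟩ := hG.2.exists_adj_of_arc hconn hx' (by omega)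
      fun j h₁ h₂ => hG.2.not_adj_center_of_lt_of_lt hx' h₁ h₂ (by omega)
    · exact ⟨rim n (x + n), rim n j, rim n x, center n, (rim_ne_rim (by omega) (by omega)).symm,
        rim_ne_center _, rim_ne_center _, hadj.symm, hx.2.symm, hspoke.symm⟩
    · rw [rim_add_period] at hadj
      exact ⟨rim n x, rim n j, rim n (x + (n - 1)), rim n (x + n),
        (rim_ne_rim (by omega) (by omega)).symm, (rim_ne_rim (by omega) (by omega)).symm,
        rim_ne_rim (by omega) (by omega), hadj.symm, hx.1, hx.2⟩

lemma hasBranchVertex_of_two_lt_card_spokes (h : 2 < #(spokes G)) : HasBranchVertex G := by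
  obtain ⟨a, ha, b, hb, c, hc, hab, hac, hbc⟩ := two_lt_card.1 h
  simp only [spokes, mem_filter, mem_range] at ha hb hc
  exact ⟨center n, rim n a, rim n b, rim n c, mt (rim_inj_of_lt ha.1 hb.1).1 hab,
    mt (rim_inj_of_lt ha.1 hc.1).1 hac, mt (rim_inj_of_lt hb.1 hc.1).1 hbc, ha.2, hb.2, hc.2⟩

end Wheel

theorem wheel_partition_no_path_general (n : ℕ) (hn : 3 ≤ n)
    (T : Fin n → SimpleGraph {x // x ∈ wheel n})
    (htree : ∀ i, IsPlaneSpanningTree (T i))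
    (hcover : ∀ a b : {x // x ∈ wheel n}, a ≠ b → ∃ i, (T i).Adj a b) :
    ∀ i, ∃ v a b c : {x // x ∈ wheel n},
      a ≠ b ∧ a ≠ c ∧ b ≠ c ∧ (T i).Adj v a ∧ (T i).Adj v b ∧ (T i).Adj v c := by
  classical
  have : NeZero n := ⟨by omega⟩
  intro i
  by_cases hi : 1 < #(longChords (T i))
  · obtain ⟨x, hx⟩ := (htree i).2.exists_isCherryAt hi
    exact (htree i).hasBranchVertex_of_isCherryAt hn hx
  have hchords : #(range (2 * n - 1)) ≤ ∑ j, #(longChords (T j)) :=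
    card_le_sum_card_filter _ (fun j a => (T j).Adj (rim n a) (rim n (a + (n - 1)))) fun a _ =>
      hcover _ _ (rim_ne_rim (Nat.lt_add_of_pos_right (by omega)) (by omega))
  have hfew : #(univ.filter fun j => #(longChords (T j)) < 2) ≤ 1 := by
    have := card_filter_lt_add_sum_le _ fun j => (htree j).2.card_longChords_le_two hn
    simp only [card_range, Fintype.card_fin] at this hchords
    omega
  have hcherry : ∀ j ≠ i, #(spokes (T j)) ≤ 1 := fun j hj => by
    have : 1 < #(longChords (T j)) := by
      by_contra hj'
      exact hj (card_le_one.1 hfew j (by simpa using hj') i (by simpa using hi))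
    obtain ⟨x, hx⟩ := (htree j).2.exists_isCherryAt this
    exact (htree j).2.card_spokes_le_one_of_isCherryAt (htree j).1.isAcyclic hx
  have hspokes : #(range (2 * n - 1)) ≤ ∑ j, #(spokes (T j)) :=
    card_le_sum_card_filter _ (fun j k => (T j).Adj (center n) (rim n k)) fun k _ =>
      hcover _ _ (rim_ne_center k).symm
  have := sum_le_add_mul_card_sub_one _ hcherry
  simp only [card_range, Fintype.card_fin] at this hspokes
  exact hasBranchVertex_of_two_lt_card_spokes (by omega)

/-- For `n ≥ 3`, in any partition of the complete geometric graph on the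
wheel `W_{2n}` into `n` plane spanning trees, no tree is a Hamiltonian path: each tree
has a vertex of degree at least 3 (three distinct neighbors). -/
theorem wheel_partition_no_path (n : ℕ) (hn : 3 ≤ n)
    (T : Fin n → SimpleGraph {x // x ∈ wheel n})
    (htree : ∀ i, IsPlaneSpanningTree (T i))
    (hdisj : ∀ i j, i ≠ j → Disjoint (T i).edgeSet (T j).edgeSet)
    (hcover : ∀ a b : {x // x ∈ wheel n}, a ≠ b → ∃ i, (T i).Adj a b) :
    ∀ i, ∃ v a b c : {x // x ∈ wheel n},
      a ≠ b ∧ a ≠ c ∧ b ≠ c ∧ (T i).Adj v a ∧ (T i).Adj v b ∧ (T i).Adj v c :=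
  wheel_partition_no_path_general n hn T htree hcover
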